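/- For all nonnegative integers n and p and all real x, λ, the truncated degenerate modified Bell polynomial satisfies B^{(p)}_{n,λ}(x) = Σ_{m=0}^{n} C(n,m) Bel^{(p)}_{m,λ} (x)_{n-m,λ}. -/
import Mathlib


open Finset

def degFall (l x : ℝ) (n : ℕ) : ℝ := ∏ i ∈ Finset.range n, (x - i * l)

def fall (x : ℝ) (n : ℕ) : ℝ := ∏ i ∈ Finset.range n, (x - i)

lemma degFall_succ (l a : ℝ) (n : ℕ) :
    degFall l a (n + 1) = degFall l a n * (a - n * l) :=
  Finset.prod_range_succ _ _

lemma degFall_zero (l a : ℝ) : degFall l a 0 = 1 := Finset.prod_range_zero _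

lemma degFall_binom (l a b : ℝ) (n : ℕ) :
    degFall l (a + b) n
      = ∑ m ∈ Finset.range (n + 1),
          (n.choose m : ℝ) * degFall l a m * degFall l b (n - m) := by
  induction n with
  | zero => simp [degFall]
  | succ n ih =>
    rw [degFall_succ, ih, Finset.sum_mul]
    have key : ∀ m ∈ Finset.range (n + 1),
        (n.choose m : ℝ) * degFall l a m * degFall l b (n - m) * (a + b - n * l)
          = (n.choose m : ℝ) * (degFall l a (m + 1) * degFall l b (n - m))
            + (n.choose m : ℝ) * (degFall l a m * degFall l b (n - m + 1)) := by
      intro m hm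
      rw [Finset.mem_range] at hm
      have hm' : m ≤ n := Nat.lt_succ_iff.mp hm
      have hc : ((n - m : ℕ) : ℝ) = (n : ℝ) - m := by
        rw [Nat.cast_sub hm']
      have hsplit : a + b - n * l = (a - m * l) + (b - (n - m : ℕ) * l) := by
        rw [hc]; ring
      rw [hsplit, degFall_succ, degFall_succ]
      ring
    rw [Finset.sum_congr rfl key, Finset.sum_add_distrib]
    -- RHS target: sum over range (n+2)
    have hTarget :
        ∑ m ∈ Finset.range (n + 2),
            ((n + 1).choose m : ℝ) * degFall l a m * degFall l b (n + 1 - m)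
          = degFall l b (n + 1)
            + ∑ m ∈ Finset.range (n + 1),
                (((n.choose m : ℝ)) + (n.choose (m + 1) : ℝ))
                  * (degFall l a (m + 1) * degFall l b (n - m)) := by
      rw [Finset.sum_range_succ' _ (n + 1)]
      simp only [Nat.choose_zero_right, Nat.cast_one, Nat.succ_sub_succ]
      rw [add_comm]
      congr 1
      · simp [degFall_zero]
      · apply Finset.sum_congr rfl
        intro m hm
        rw [Nat.choose_succ_succ' n m]
        push_cast
        ring
    rw [hTarget]
    have hS2 :
        ∑ m ∈ Finset.range (n + 1),
            (n.choose m : ℝ) * (degFall l a m * degFall l b (n - m + 1))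
          = degFall l b (n + 1)
            + ∑ m ∈ Finset.range n,
                (n.choose (m + 1) : ℝ) * (degFall l a (m + 1) * degFall l b (n - m)) := by
      rw [Finset.sum_range_succ' _ n]
      simp only [Nat.choose_zero_right, Nat.cast_one, degFall_zero]
      rw [add_comm]
      congr 1
      · rw [Nat.sub_zero]; ring
      · apply Finset.sum_congr rfl
        intro m hm
        rw [Finset.mem_range] at hm
        have : n - (m + 1) + 1 = n - m := by omega
        rw [this]
    rw [hS2]
    have hlast :
        ∑ m ∈ Finset.range (n + 1),
            (n.choose (m + 1) : ℝ) * (degFall l a (m + 1) * degFall l b (n - m))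
          = ∑ m ∈ Finset.range n,
              (n.choose (m + 1) : ℝ) * (degFall l a (m + 1) * degFall l b (n - m)) := by
      rw [Finset.sum_range_succ, Nat.choose_succ_self, Nat.cast_zero, zero_mul, add_zero]
    have hsplitsum :
        ∑ m ∈ Finset.range (n + 1),
            (((n.choose m : ℝ)) + (n.choose (m + 1) : ℝ))
              * (degFall l a (m + 1) * degFall l b (n - m))
          = (∑ m ∈ Finset.range (n + 1),
              (n.choose m : ℝ) * (degFall l a (m + 1) * degFall l b (n - m)))
            + ∑ m ∈ Finset.range (n + 1),
                (n.choose (m + 1) : ℝ) * (degFall l a (m + 1) * degFall l b (n - m)) := by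
      rw [← Finset.sum_add_distrib]
      apply Finset.sum_congr rfl
      intro m hm; ring
    rw [hsplitsum, hlast]
    ring

lemma fall_nat_zero {j k : ℕ} (h : j < k) : fall (j : ℝ) k = 0 := by
  apply Finset.prod_eq_zero (Finset.mem_range.mpr h)
  simp

lemma fall_nat_self_ne_zero (j : ℕ) : fall (j : ℝ) j ≠ 0 := by
  rw [fall, Finset.prod_ne_zero_iff]
  intro i hi
  rw [Finset.mem_range] at hi
  have : (i : ℝ) < j := by exact_mod_cast hi
  intro hc
  linarith

lemma coeff_extract (n : ℕ) (c : ℕ → ℝ)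
    (h : ∀ y : ℝ, ∑ k ∈ Finset.range (n + 1), c k * fall y k = 0) :
    ∀ k, k ≤ n → c k = 0 := by
  intro k
  induction k using Nat.strong_induction_on with
  | _ j ih =>
    intro hj
    have hsum := h (j : ℝ)
    have hsingle : ∑ k ∈ Finset.range (n + 1), c k * fall (j : ℝ) k
        = c j * fall (j : ℝ) j := by
      apply Finset.sum_eq_single_of_mem j (Finset.mem_range.mpr (Nat.lt_succ_of_le hj))
      intro k hk hne
      rcases lt_or_gt_of_ne hne with hlt | hgt
      · rw [ih k hlt (le_trans (le_of_lt hlt) hj), zero_mul]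
      · rw [fall_nat_zero hgt, mul_zero]
    rw [hsingle] at hsum
    exact (mul_eq_zero.mp hsum).resolve_right (fall_nat_self_ne_zero j)

theorem truncated_degenerate_modified_Bell_via_truncated_Bell
    (l x : ℝ) (n p : ℕ)
    (S2 : ℕ → ℕ → ℝ) (S2x : ℕ → ℕ → ℝ)
    (hS : ∀ (y : ℝ) (m : ℕ),
      degFall l y m = ∑ k ∈ Finset.range (m + 1), S2 m k * fall y k)
    (hSx : ∀ (y : ℝ) (m : ℕ),
      degFall l (y + x) m = ∑ k ∈ Finset.range (m + 1), S2x m k * fall y k) :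
    (∑ k ∈ Finset.range (n + 1), S2x n k / (((k + p).choose p : ℕ) : ℝ))
      = ∑ m ∈ Finset.range (n + 1), ((n.choose m : ℕ) : ℝ) *
          (∑ k ∈ Finset.range (m + 1), S2 m k / (((k + p).choose k : ℕ) : ℝ)) *
          degFall l x (n - m) := by
  -- extended S2: zero above the diagonal
  set S2' : ℕ → ℕ → ℝ := fun m k => if k ≤ m then S2 m k else 0 with hS2'
  have hext : ∀ (y : ℝ) (m : ℕ), m ≤ n →
      degFall l y m = ∑ k ∈ Finset.range (n + 1), S2' m k * fall y k := by
    intro y m hm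
    rw [hS y m]
    rw [← Finset.sum_subset (Finset.range_subset_range.mpr (Nat.succ_le_succ hm))]
    · apply Finset.sum_congr rfl
      intro k hk
      rw [Finset.mem_range] at hk
      simp [hS2', Nat.lt_succ_iff.mp hk]
    · intro k hk hk2
      rw [Finset.mem_range] at hk
      rw [Finset.mem_range, not_lt] at hk2
      have hkm : ¬ k ≤ m := by omega
      simp [hS2', hkm]
  -- key coefficient identity
  have hcoeff : ∀ k, k ≤ n → S2x n k
      = ∑ m ∈ Finset.range (n + 1),
          (n.choose m : ℝ) * S2' m k * degFall l x (n - m) := by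
    have hzero : ∀ y : ℝ, ∑ k ∈ Finset.range (n + 1),
        (S2x n k - ∑ m ∈ Finset.range (n + 1),
          (n.choose m : ℝ) * S2' m k * degFall l x (n - m)) * fall y k = 0 := by
      intro y
      have h1 : ∑ k ∈ Finset.range (n + 1), S2x n k * fall y k
          = ∑ k ∈ Finset.range (n + 1),
              (∑ m ∈ Finset.range (n + 1),
                (n.choose m : ℝ) * S2' m k * degFall l x (n - m)) * fall y k := by
        rw [← hSx y n, degFall_binom]
        calc ∑ m ∈ Finset.range (n + 1),
              (n.choose m : ℝ) * degFall l y m * degFall l x (n - m)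
            = ∑ m ∈ Finset.range (n + 1), ∑ k ∈ Finset.range (n + 1),
                (n.choose m : ℝ) * S2' m k * degFall l x (n - m) * fall y k := by
              apply Finset.sum_congr rfl
              intro m hm
              rw [Finset.mem_range] at hm
              rw [hext y m (Nat.lt_succ_iff.mp hm), Finset.mul_sum, Finset.sum_mul]
              apply Finset.sum_congr rfl
              intro k hk
              ring
          _ = ∑ k ∈ Finset.range (n + 1), ∑ m ∈ Finset.range (n + 1),
                (n.choose m : ℝ) * S2' m k * degFall l x (n - m) * fall y k :=
              Finset.sum_comm
          _ = ∑ k ∈ Finset.range (n + 1),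
                (∑ m ∈ Finset.range (n + 1),
                  (n.choose m : ℝ) * S2' m k * degFall l x (n - m)) * fall y k := by
              apply Finset.sum_congr rfl
              intro k hk
              rw [Finset.sum_mul]
      simp only [sub_mul, Finset.sum_sub_distrib]
      rw [h1, sub_self]
    intro k hk
    have := coeff_extract n _ hzero k hk
    linarith [this]
  -- now conclude
  have hchoose : ∀ k : ℕ, (k + p).choose p = (k + p).choose k := by
    intro k
    rw [← Nat.choose_symm (Nat.le_add_left p k), Nat.add_sub_cancel]
  calc ∑ k ∈ Finset.range (n + 1), S2x n k / (((k + p).choose p : ℕ) : ℝ)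
      = ∑ k ∈ Finset.range (n + 1),
          (∑ m ∈ Finset.range (n + 1),
            (n.choose m : ℝ) * S2' m k * degFall l x (n - m)) / (((k + p).choose k : ℕ) : ℝ) := by
        apply Finset.sum_congr rfl
        intro k hk
        rw [Finset.mem_range] at hk
        rw [hcoeff k (Nat.lt_succ_iff.mp hk), hchoose k]
    _ = ∑ m ∈ Finset.range (n + 1), ((n.choose m : ℕ) : ℝ) *
          (∑ k ∈ Finset.range (n + 1), S2' m k / (((k + p).choose k : ℕ) : ℝ)) *
          degFall l x (n - m) := by
        calc ∑ k ∈ Finset.range (n + 1),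
              (∑ m ∈ Finset.range (n + 1),
                (n.choose m : ℝ) * S2' m k * degFall l x (n - m)) / (((k + p).choose k : ℕ) : ℝ)
            = ∑ k ∈ Finset.range (n + 1), ∑ m ∈ Finset.range (n + 1),
                (n.choose m : ℝ) * (S2' m k / (((k + p).choose k : ℕ) : ℝ)) * degFall l x (n - m) := by
              apply Finset.sum_congr rfl
              intro k hk
              rw [Finset.sum_div]
              apply Finset.sum_congr rfl
              intro m hm
              ring
          _ = ∑ m ∈ Finset.range (n + 1), ∑ k ∈ Finset.range (n + 1),
                (n.choose m : ℝ) * (S2' m k / (((k + p).choose k : ℕ) : ℝ)) * degFall l x (n - m) :=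
              Finset.sum_comm
          _ = _ := by
              apply Finset.sum_congr rfl
              intro m hm
              rw [Finset.mul_sum, Finset.sum_mul]
    _ = ∑ m ∈ Finset.range (n + 1), ((n.choose m : ℕ) : ℝ) *
          (∑ k ∈ Finset.range (m + 1), S2 m k / (((k + p).choose k : ℕ) : ℝ)) *
          degFall l x (n - m) := by
        apply Finset.sum_congr rfl
        intro m hm
        rw [Finset.mem_range] at hm
        congr 1
        congr 1
        rw [← Finset.sum_subset (Finset.range_subset_range.mpr (Nat.succ_le_succ (Nat.lt_succ_iff.mp hm)))]
        · apply Finset.sum_congr rfl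
          intro k hk
          rw [Finset.mem_range] at hk
          simp [hS2', Nat.lt_succ_iff.mp hk]
        · intro k hk hk2
          rw [Finset.mem_range, not_lt] at hk2
          have : ¬ k ≤ m := by omega
          simp [hS2', this]
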